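/- Let U, Ṽ satisfy the parameter-free CRW-type ultradiscrete Burgers equation with initial data satisfying 0 ≤ U_j^0 ≤ L, Ṽ_j^{-1} + Ṽ_j^0 ≤ L, Ṽ_j^{-1} ≥ 0, Ṽ_j^0 ≥ 0 for all j, and suppose M := sup_j I_j^0 < ∞ where I_j^0 = min(U_{j-1}^0, L - U_j^0, Ṽ_j^{-1}) + Ṽ_j^0. If moreover all initial values U_j^0, Ṽ_j^{-1}, Ṽ_j^0 and L are integers, then for all n ≥ 1 and all j, (U_j^n, Ṽ_j^n) ∈ {0,1,…,L} × {0,1,…,M}; i.e., the system defines a cellular automaton with finite state set. -/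

import Mathlib

/-!
Write `f j n = min (U (j-1) n, L - U j n, V j (n-1))` for the flux entering cell `j` at
time `n`. The equation says `U j (n+1) = U j n + f j n - f (j+1) n` and
`V j (n+1) + f j (n+1) = V j n + f j n`, so `I j n = V j n + f j n` is conserved at every
site. Since each flux is bounded by the quantity it is subtracted from, the bounds
`0 ≤ U ≤ L` and `0 ≤ V` propagate by induction, and then `V j n ≤ I j n = I j 0 ≤ M`.
Fluxes are minima of sums and differences of earlier values, so the evolution never leaves
an additive subgroup containing the data, in particular the integers.
-/

section CRWBurgers

variable {G : Type*} [AddCommGroup G] [LinearOrder G] {L : G} {U V : ℤ → ℤ → G}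

def crwFlux (L : G) (U V : ℤ → ℤ → G) (j n : ℤ) : G :=
  min (U (j - 1) n) (min (L - U j n) (V j (n - 1)))

theorem crwFlux_nonneg [IsOrderedAddMonoid G] {j n : ℤ} (hU : 0 ≤ U (j - 1) n)
    (hUL : U j n ≤ L) (hV : 0 ≤ V j (n - 1)) : 0 ≤ crwFlux L U V j n :=
  le_min hU (le_min (sub_nonneg.2 hUL) hV)

theorem crwFlux_add_one_le_U (j n : ℤ) : crwFlux L U V (j + 1) n ≤ U j n := by
  simpa only [crwFlux, add_sub_cancel_right] using min_le_left (U (j + 1 - 1) n) _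

theorem crwFlux_le_sub_U (j n : ℤ) : crwFlux L U V j n ≤ L - U j n :=
  (min_le_right _ _).trans (min_le_left _ _)

theorem crwFlux_add_one_time_le_V (j n : ℤ) : crwFlux L U V j (n + 1) ≤ V j n := by
  simpa only [crwFlux, add_sub_cancel_right] using
    (min_le_right _ _).trans (min_le_right (L - U j (n + 1)) (V j (n + 1 - 1)))

theorem crwFlux_mem {S : AddSubgroup G} (hL : L ∈ S) {j n : ℤ} (hU₁ : U (j - 1) n ∈ S)
    (hU₂ : U j n ∈ S) (hV : V j (n - 1) ∈ S) : crwFlux L U V j n ∈ S := by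
  have min_mem : ∀ {a b : G}, a ∈ S → b ∈ S → min a b ∈ S := fun {a b} ha hb => by
    rcases min_choice a b with h | h <;> rw [h] <;> assumption
  exact min_mem hU₁ (min_mem (S.sub_mem hL hU₂) hV)

structure IsCRWSolution (L : G) (U V : ℤ → ℤ → G) : Prop where
  U_add_one : ∀ j n, 0 ≤ n →
    U j (n + 1) = U j n + crwFlux L U V j n - crwFlux L U V (j + 1) n
  V_add_one : ∀ j n, 0 ≤ n →
    V j (n + 1) = V j n + crwFlux L U V j n - crwFlux L U V j (n + 1)

structure CRWAdmissibleAt (L : G) (U V : ℤ → ℤ → G) (n : ℤ) : Prop where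
  U_nonneg : ∀ j, 0 ≤ U j n
  U_le : ∀ j, U j n ≤ L
  V_sub_one_nonneg : ∀ j, 0 ≤ V j (n - 1)
  V_nonneg : ∀ j, 0 ≤ V j n

theorem CRWAdmissibleAt.crwFlux_nonneg [IsOrderedAddMonoid G] {n : ℤ}
    (h : CRWAdmissibleAt L U V n) (j : ℤ) : 0 ≤ crwFlux L U V j n :=
  _root_.crwFlux_nonneg (h.U_nonneg (j - 1)) (h.U_le j) (h.V_sub_one_nonneg j)

namespace IsCRWSolution

theorem V_add_crwFlux_eq (hs : IsCRWSolution L U V) (j : ℤ) {n : ℤ} (hn : 0 ≤ n) :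
    V j n + crwFlux L U V j n = V j 0 + crwFlux L U V j 0 := by
  induction n, hn using Int.leInduction with
  | base => rfl
  | succ n hn ih => rw [hs.V_add_one j n hn, sub_add_cancel, ih]

theorem mem_addSubgroup (hs : IsCRWSolution L U V) {S : AddSubgroup G} (hL : L ∈ S)
    (hU : ∀ j, U j 0 ∈ S) (hV₁ : ∀ j, V j (-1) ∈ S) (hV₀ : ∀ j, V j 0 ∈ S) {n : ℤ}
    (hn : 0 ≤ n) (j : ℤ) : U j n ∈ S ∧ V j (n - 1) ∈ S ∧ V j n ∈ S := by
  induction n, hn using Int.leInduction generalizing j with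
  | base => exact ⟨hU j, hV₁ j, hV₀ j⟩
  | succ n hn ih =>
    have hV_prev : V j (n + 1 - 1) ∈ S := by simpa only [add_sub_cancel_right] using (ih j).2.2
    have hf : ∀ j, crwFlux L U V j n ∈ S := fun j =>
      crwFlux_mem hL (ih (j - 1)).1 (ih j).1 (ih j).2.1
    have hU' : ∀ j, U j (n + 1) ∈ S := fun j => by
      rw [hs.U_add_one j n hn]
      exact S.sub_mem (S.add_mem (ih j).1 (hf j)) (hf (j + 1))
    refine ⟨hU' j, hV_prev, ?_⟩
    rw [hs.V_add_one j n hn]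
    exact S.sub_mem (S.add_mem (ih j).2.2 (hf j)) (crwFlux_mem hL (hU' (j - 1)) (hU' j) hV_prev)

variable [IsOrderedAddMonoid G]

theorem admissibleAt_add_one (hs : IsCRWSolution L U V) {n : ℤ} (hn : 0 ≤ n)
    (h : CRWAdmissibleAt L U V n) : CRWAdmissibleAt L U V (n + 1) where
  U_nonneg j := by
    rw [hs.U_add_one j n hn]
    exact sub_nonneg.2 (le_add_of_le_of_nonneg (crwFlux_add_one_le_U j n) (h.crwFlux_nonneg j))
  U_le j := by
    rw [hs.U_add_one j n hn]
    exact (sub_le_self _ (h.crwFlux_nonneg (j + 1))).trans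
      (le_sub_iff_add_le'.1 (crwFlux_le_sub_U j n))
  V_sub_one_nonneg j := by simpa only [add_sub_cancel_right] using h.V_nonneg j
  V_nonneg j := by
    rw [hs.V_add_one j n hn]
    exact sub_nonneg.2
      (le_add_of_le_of_nonneg (crwFlux_add_one_time_le_V j n) (h.crwFlux_nonneg j))

theorem admissibleAt (hs : IsCRWSolution L U V) (h₀ : CRWAdmissibleAt L U V 0) {n : ℤ}
    (hn : 0 ≤ n) : CRWAdmissibleAt L U V n := by
  induction n, hn using Int.leInduction with
  | base => exact h₀
  | succ n hn ih => exact hs.admissibleAt_add_one hn ih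

theorem V_le (hs : IsCRWSolution L U V) (h₀ : CRWAdmissibleAt L U V 0) (j : ℤ) {n : ℤ}
    (hn : 0 ≤ n) : V j n ≤ V j 0 + crwFlux L U V j 0 := by
  rw [← hs.V_add_crwFlux_eq j hn]
  exact le_add_of_nonneg_right ((hs.admissibleAt h₀ hn).crwFlux_nonneg j)

end IsCRWSolution

end CRWBurgers

theorem crw_ud_burgers_cellular_automaton_general (L : ℤ) (U V : ℤ → ℤ → ℝ)
    (hU : ∀ (j n : ℤ), 0 ≤ n →
      U j (n + 1) = U j n
        + min (U (j - 1) n) (min ((L : ℝ) - U j n) (V j (n - 1)))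
        - min (U j n) (min ((L : ℝ) - U (j + 1) n) (V (j + 1) (n - 1))))
    (hV : ∀ (j n : ℤ), 0 ≤ n →
      V j (n + 1) = V j n
        + min (U (j - 1) n) (min ((L : ℝ) - U j n) (V j (n - 1)))
        - min (U (j - 1) (n + 1)) (min ((L : ℝ) - U j (n + 1)) (V j n)))
    (hU0 : ∀ j : ℤ, 0 ≤ U j 0 ∧ U j 0 ≤ (L : ℝ))
    (hVm1 : ∀ j : ℤ, 0 ≤ V j (-1)) (hV0 : ∀ j : ℤ, 0 ≤ V j 0)
    (M : ℝ)
    (hM : ∀ j : ℤ, min (U (j - 1) 0) (min ((L : ℝ) - U j 0) (V j (-1))) + V j 0 ≤ M)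
    (hUint : ∀ j : ℤ, ∃ k : ℤ, U j 0 = (k : ℝ))
    (hVm1int : ∀ j : ℤ, ∃ k : ℤ, V j (-1) = (k : ℝ))
    (hV0int : ∀ j : ℤ, ∃ k : ℤ, V j 0 = (k : ℝ)) :
    ∀ (n : ℤ), 1 ≤ n → ∀ j : ℤ,
      (∃ a : ℤ, U j n = (a : ℝ) ∧ 0 ≤ a ∧ a ≤ L) ∧
      (∃ b : ℤ, V j n = (b : ℝ) ∧ 0 ≤ b ∧ (b : ℝ) ≤ M) := by
  have hs : IsCRWSolution (L : ℝ) U V :=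
    ⟨fun j n hn => by simpa only [crwFlux, add_sub_cancel_right] using hU j n hn,
     fun j n hn => by simpa only [crwFlux, add_sub_cancel_right] using hV j n hn⟩
  have h₀ : CRWAdmissibleAt (L : ℝ) U V 0 :=
    ⟨fun j => (hU0 j).1, fun j => (hU0 j).2, by simpa only [zero_sub] using hVm1, hV0⟩
  have isInt : ∀ {x : ℝ}, (∃ k : ℤ, x = k) → x ∈ (⊥ : Subring ℝ).toAddSubgroup :=
    fun ⟨k, hk⟩ => Subring.mem_bot.2 ⟨k, hk.symm⟩
  intro n hn j
  have hn₀ : 0 ≤ n := by omega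
  have hadm := hs.admissibleAt h₀ hn₀
  obtain ⟨hUj, -, hVj⟩ := hs.mem_addSubgroup (isInt ⟨L, rfl⟩) (fun j => isInt (hUint j))
    (fun j => isInt (hVm1int j)) (fun j => isInt (hV0int j)) hn₀ j
  obtain ⟨a, ha⟩ := Subring.mem_bot.1 hUj
  obtain ⟨b, hb⟩ := Subring.mem_bot.1 hVj
  have hVM : V j n ≤ M := (hs.V_le h₀ j hn₀).trans (by
    simpa only [crwFlux, zero_sub, add_comm (V j 0)] using hM j)
  refine ⟨⟨a, ha.symm, ?_, ?_⟩, ⟨b, hb.symm, ?_, hb ▸ hVM⟩⟩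
  · exact_mod_cast ha ▸ hadm.U_nonneg j
  · exact_mod_cast ha ▸ hadm.U_le j
  · exact_mod_cast hb ▸ hadm.V_nonneg j

/-- Corollary: with integer initial data and M an upper bound for the
initial quantities I_j^0, the CRW-type ultradiscrete Burgers equation defines
a cellular automaton with states (U_j^n, Ṽ_j^n) ∈ {0,…,L} × {0,…,M}. -/
theorem crw_ud_burgers_cellular_automaton (L : ℤ) (U V : ℤ → ℤ → ℝ)
    (hU : ∀ (j n : ℤ), 0 ≤ n →
      U j (n + 1) = U j n
        + min (U (j - 1) n) (min ((L : ℝ) - U j n) (V j (n - 1)))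
        - min (U j n) (min ((L : ℝ) - U (j + 1) n) (V (j + 1) (n - 1))))
    (hV : ∀ (j n : ℤ), 0 ≤ n →
      V j (n + 1) = V j n
        + min (U (j - 1) n) (min ((L : ℝ) - U j n) (V j (n - 1)))
        - min (U (j - 1) (n + 1)) (min ((L : ℝ) - U j (n + 1)) (V j n)))
    (hU0 : ∀ j : ℤ, 0 ≤ U j 0 ∧ U j 0 ≤ (L : ℝ))
    (hVm1 : ∀ j : ℤ, 0 ≤ V j (-1)) (hV0 : ∀ j : ℤ, 0 ≤ V j 0)
    (hVsum : ∀ j : ℤ, V j (-1) + V j 0 ≤ (L : ℝ))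
    (M : ℝ)
    (hM : ∀ j : ℤ, min (U (j - 1) 0) (min ((L : ℝ) - U j 0) (V j (-1))) + V j 0 ≤ M)
    (hUint : ∀ j : ℤ, ∃ k : ℤ, U j 0 = (k : ℝ))
    (hVm1int : ∀ j : ℤ, ∃ k : ℤ, V j (-1) = (k : ℝ))
    (hV0int : ∀ j : ℤ, ∃ k : ℤ, V j 0 = (k : ℝ)) :
    ∀ (n : ℤ), 1 ≤ n → ∀ j : ℤ,
      (∃ a : ℤ, U j n = (a : ℝ) ∧ 0 ≤ a ∧ a ≤ L) ∧
      (∃ b : ℤ, V j n = (b : ℝ) ∧ 0 ≤ b ∧ (b : ℝ) ≤ M) :=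
  crw_ud_burgers_cellular_automaton_general L U V hU hV hU0 hVm1 hV0 M hM hUint hVm1int hV0int
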